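/- arXiv:1302.2743 — 2 statements merged into one kernel-verified Lean document; each statement's English description precedes it below -/
import Mathlib

section
/- Let p ∈ [0,1], p̄ = 1 − p, and let A : ℕ × ℕ → ℝ be finitely supported with ∑_{k,l} A(k,l) ≠ 0, ∑_{k,l} k·A(k,l) ≠ 0 and ∑_{k,l} l·A(k,l) ≠ 0. Define α = (∑_{k,l} l(l−1)A(k,l))/(∑_{k,l} l·A(k,l)), β = (∑_{k,l} k·l·A(k,l))/(∑_{k,l} k·A(k,l)), γ = (∑_{k,l} l·A(k,l))/(∑_{k,l} A(k,l)), and define B : ℕ × ℕ → ℝ by B(k,l) = (p̄/2)(1+α)[(l+1)A(k−1,l+1) − l·A(k,l)] + (p̄β/2)[(k+1)A(k+1,l−1) − k·A(k,l)] + (p/2)[(l+1)A(k−1,l+1) − l·A(k,l)] + (p/2)[(l+1)A(k,l+1) − l·A(k,l)] + (pγ/2)[A(k−1,l) − A(k,l)] (terms with negative indices being zero). Then for all real x, y: ∑_{k,l} B(k,l) x^k y^l = (p̄β/2)(y−x)·Q_x(x,y) + [ (p̄/2)(x−y) + (p̄α/2)(x−y) + (p/2)(x−y) + (p/2)(1−y)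 ]·Q_y(x,y) + (pγ/2)(x−1)·Q(x,y). -/
/-- The generating function `Q(x,y) = ∑_{k,l} A(k,l) x^k y^l` of a finitely
supported family of coefficients `A : ℕ × ℕ → ℝ`. -/
noncomputable def genFun (A : ℕ → ℕ → ℝ) (x y : ℝ) : ℝ :=
  ∑' k : ℕ, ∑' l : ℕ, A k l * x ^ k * y ^ l

/-! Multiplying `Q` by `x` or `y` shifts the coefficient array by one in that index, and `Q_x`,
`Q_y` have coefficients `(k+1) A(k+1,l)` and `(l+1) A(k,l+1)`; so `x Q_x` and `y Q_y` have
coefficients `k A(k,l)` and `l A(k,l)`. The five brackets in `B` are therefore the coefficient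
arrays of `x Q_y - y Q_y`, `y Q_x - x Q_x`, `x Q_y - y Q_y`, `Q_y - y Q_y` and `x Q - Q`, and the
identity follows by linearity of `A ↦ Q` on finitely supported arrays. -/

open Finset

section CoeffArray

variable {R : Type*}

def shiftFst [Zero R] (F : ℕ → ℕ → R) (k l : ℕ) : R := if k = 0 then 0 else F (k - 1) l

def shiftSnd [Zero R] (F : ℕ → ℕ → R) (k l : ℕ) : R := if l = 0 then 0 else F k (l - 1)

def derivFst [Semiring R] (F : ℕ → ℕ → R) (k l : ℕ) : R := ((k : R) + 1) * F (k + 1) l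

def derivSnd [Semiring R] (F : ℕ → ℕ → R) (k l : ℕ) : R := ((l : R) + 1) * F k (l + 1)

theorem shiftFst_derivFst [Semiring R] (F : ℕ → ℕ → R) (k l : ℕ) :
    shiftFst (derivFst F) k l = k * F k l := by
  cases k <;> simp [shiftFst, derivFst]

theorem shiftSnd_derivSnd [Semiring R] (F : ℕ → ℕ → R) (k l : ℕ) :
    shiftSnd (derivSnd F) k l = l * F k l := by
  cases l <;> simp [shiftSnd, derivSnd]

def HasBoundedSupport [Zero R] (F : ℕ → ℕ → R) : Prop :=
  ∃ N, ∀ k l, N ≤ k ∨ N ≤ l → F k l = 0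

theorem hasBoundedSupport_of_finite_support [Zero R] {F : ℕ → ℕ → R}
    (hF : (Function.support fun q : ℕ × ℕ => F q.1 q.2).Finite) : HasBoundedSupport F := by
  obtain ⟨⟨a, b⟩, hab⟩ := hF.bddAbove
  refine ⟨max a b + 1, fun k l hkl => ?_⟩
  by_contra hne
  have : k ≤ a ∧ l ≤ b := Prod.mk_le_mk.mp (hab (a := (k, l)) hne)
  omega

namespace HasBoundedSupport

theorem add [AddZeroClass R] {F G : ℕ → ℕ → R} (hF : HasBoundedSupport F)
    (hG : HasBoundedSupport G) : HasBoundedSupport (F + G) := by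
  obtain ⟨M, hM⟩ := hF
  obtain ⟨N, hN⟩ := hG
  exact ⟨max M N, fun k l h => by simp [hM k l (by omega), hN k l (by omega)]⟩

theorem sub [AddGroup R] {F G : ℕ → ℕ → R} (hF : HasBoundedSupport F)
    (hG : HasBoundedSupport G) : HasBoundedSupport (F - G) := by
  obtain ⟨M, hM⟩ := hF
  obtain ⟨N, hN⟩ := hG
  exact ⟨max M N, fun k l h => by simp [hM k l (by omega), hN k l (by omega)]⟩

theorem smul {S : Type*} [Zero R] [SMulZeroClass S R] (c : S) {F : ℕ → ℕ → R}
    (hF : HasBoundedSupport F) : HasBoundedSupport (c • F) := by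
  obtain ⟨N, hN⟩ := hF
  exact ⟨N, fun k l h => by simp [hN k l h]⟩

theorem shiftFst [Zero R] {F : ℕ → ℕ → R} (hF : HasBoundedSupport F) :
    HasBoundedSupport (shiftFst F) := by
  obtain ⟨N, hN⟩ := hF
  exact ⟨N + 1, fun k l h => by
    unfold _root_.shiftFst; split_ifs <;> [rfl; exact hN _ _ (by omega)]⟩

theorem shiftSnd [Zero R] {F : ℕ → ℕ → R} (hF : HasBoundedSupport F) :
    HasBoundedSupport (shiftSnd F) := by
  obtain ⟨N, hN⟩ := hF
  exact ⟨N + 1, fun k l h => by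
    unfold _root_.shiftSnd; split_ifs <;> [rfl; exact hN _ _ (by omega)]⟩

theorem derivFst [Semiring R] {F : ℕ → ℕ → R} (hF : HasBoundedSupport F) :
    HasBoundedSupport (derivFst F) := by
  obtain ⟨N, hN⟩ := hF
  exact ⟨N, fun k l h => by simp [_root_.derivFst, hN (k + 1) l (by omega)]⟩

theorem derivSnd [Semiring R] {F : ℕ → ℕ → R} (hF : HasBoundedSupport F) :
    HasBoundedSupport (derivSnd F) := by
  obtain ⟨N, hN⟩ := hF
  exact ⟨N, fun k l h => by simp [_root_.derivSnd, hN k (l + 1) (by omega)]⟩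

end HasBoundedSupport

end CoeffArray

/-- No summability is needed: `f` and its shift are summable together. -/
theorem tsum_eq_tsum_add_one_of_apply_zero {G : Type*} [AddCommGroup G] [TopologicalSpace G]
    [IsTopologicalAddGroup G] [T2Space G] {f : ℕ → G} (h0 : f 0 = 0) :
    ∑' n, f n = ∑' n, f (n + 1) := by
  by_cases hf : Summable f
  · rw [hf.tsum_eq_zero_add, h0, zero_add]
  · rw [tsum_eq_zero_of_not_summable hf,
      tsum_eq_zero_of_not_summable (mt (summable_nat_add_iff 1).mp hf)]

section GenFun

variable {F G : ℕ → ℕ → ℝ} (x y : ℝ)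

theorem genFun_eq_sum_range {N m n : ℕ} (hN : ∀ k l, N ≤ k ∨ N ≤ l → F k l = 0)
    (hm : N ≤ m) (hn : N ≤ n) :
    genFun F x y = ∑ k ∈ range m, ∑ l ∈ range n, F k l * x ^ k * y ^ l := by
  have hrow : ∀ k, ∑' l, F k l * x ^ k * y ^ l = ∑ l ∈ range n, F k l * x ^ k * y ^ l :=
    fun k => tsum_eq_sum fun l hl => by simp [hN k l (by simp at hl; omega)]
  rw [genFun, tsum_eq_sum (s := range m) fun k hk => ?_]
  · exact sum_congr rfl fun k _ => hrow k
  · rw [hrow]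
    exact sum_eq_zero fun l _ => by simp [hN k l (by simp at hk; omega)]

theorem genFun_smul (c : ℝ) : genFun (c • F) x y = c * genFun F x y := by
  simp only [genFun, Pi.smul_apply, smul_eq_mul, mul_assoc, tsum_mul_left]

theorem genFun_add (hF : HasBoundedSupport F) (hG : HasBoundedSupport G) :
    genFun (F + G) x y = genFun F x y + genFun G x y := by
  obtain ⟨M, hM⟩ := hF
  obtain ⟨N, hN⟩ := hG
  have hMN : ∀ k l, max M N ≤ k ∨ max M N ≤ l → (F + G) k l = 0 := fun k l h => by
    simp [hM k l (by omega), hN k l (by omega)]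
  rw [genFun_eq_sum_range x y hMN le_rfl le_rfl,
    genFun_eq_sum_range x y hM (le_max_left M N) (le_max_left M N),
    genFun_eq_sum_range x y hN (le_max_right M N) (le_max_right M N)]
  simp only [Pi.add_apply, add_mul, sum_add_distrib]

theorem genFun_sub (hF : HasBoundedSupport F) (hG : HasBoundedSupport G) :
    genFun (F - G) x y = genFun F x y - genFun G x y := by
  rw [sub_eq_add_neg, ← neg_one_smul ℝ G, genFun_add x y hF (hG.smul _), genFun_smul]
  ring

theorem genFun_shiftFst : genFun (shiftFst F) x y = x * genFun F x y := by
  rw [genFun, tsum_eq_tsum_add_one_of_apply_zero (by simp [shiftFst]), genFun, ← tsum_mul_left]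
  refine tsum_congr fun k => ?_
  rw [← tsum_mul_left]
  refine tsum_congr fun l => ?_
  simp only [shiftFst, Nat.add_one_ne_zero, if_false, Nat.add_sub_cancel, pow_succ]
  ring

theorem genFun_shiftSnd : genFun (shiftSnd F) x y = y * genFun F x y := by
  rw [genFun, genFun, ← tsum_mul_left]
  refine tsum_congr fun k => ?_
  rw [tsum_eq_tsum_add_one_of_apply_zero (by simp [shiftSnd]), ← tsum_mul_left]
  refine tsum_congr fun l => ?_
  simp only [shiftSnd, Nat.add_one_ne_zero, if_false, Nat.add_sub_cancel, pow_succ]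
  ring

theorem hasDerivAt_genFun_fst (hF : HasBoundedSupport F) :
    HasDerivAt (fun x' => genFun F x' y) (genFun (derivFst F) x y) x := by
  obtain ⟨N, hN⟩ := hF
  have hsum : (fun x' => genFun F x' y)
      = fun x' => ∑ k ∈ range (N + 1), ∑ l ∈ range N, F k l * x' ^ k * y ^ l :=
    funext fun x' => genFun_eq_sum_range x' y hN (Nat.le_succ N) le_rfl
  rw [hsum, genFun_eq_sum_range x y (N := N)
    (fun k l h => by simp [derivFst, hN (k + 1) l (by omega)]) le_rfl le_rfl]
  have := HasDerivAt.fun_sum (u := range (N + 1)) fun k _ => HasDerivAt.fun_sum (u := range N)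
    fun l _ => ((hasDerivAt_pow k x).const_mul (F k l)).mul_const (y ^ l)
  refine this.congr_deriv ?_
  rw [sum_range_succ']
  simp only [Nat.cast_add, Nat.cast_one, add_tsub_cancel_right, CharP.cast_eq_zero, zero_tsub,
    pow_zero, mul_one, mul_zero, zero_mul, sum_const_zero, add_zero, derivFst]
  exact sum_congr rfl fun k _ => sum_congr rfl fun l _ => by ring

theorem hasDerivAt_genFun_snd (hF : HasBoundedSupport F) :
    HasDerivAt (fun y' => genFun F x y') (genFun (derivSnd F) x y) y := by
  obtain ⟨N, hN⟩ := hF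
  have hsum : (fun y' => genFun F x y')
      = fun y' => ∑ k ∈ range N, ∑ l ∈ range (N + 1), F k l * x ^ k * y' ^ l :=
    funext fun y' => genFun_eq_sum_range x y' hN le_rfl (Nat.le_succ N)
  rw [hsum, genFun_eq_sum_range x y (N := N)
    (fun k l h => by simp [derivSnd, hN k (l + 1) (by omega)]) le_rfl le_rfl]
  have := HasDerivAt.fun_sum (u := range N) fun k _ => HasDerivAt.fun_sum (u := range (N + 1))
    fun l _ => (hasDerivAt_pow l y).const_mul (F k l * x ^ k)
  refine this.congr_deriv (sum_congr rfl fun k _ => ?_)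
  rw [sum_range_succ']
  simp only [Nat.cast_add, Nat.cast_one, add_tsub_cancel_right, CharP.cast_eq_zero, zero_tsub,
    pow_zero, mul_one, mul_zero, add_zero, derivSnd]
  exact sum_congr rfl fun l _ => by ring

end GenFun

theorem voter_pde_rhs_general (p : ℝ)
    (A : ℕ → ℕ → ℝ)
    (hA : (Function.support fun q : ℕ × ℕ => A q.1 q.2).Finite)
    (α β γ : ℝ)
    (B : ℕ → ℕ → ℝ)
    (hB : ∀ k l : ℕ, B k l =
        ((1 - p) / 2) * (1 + α) *
          (((l : ℝ) + 1) * (if k = 0 then 0 else A (k - 1) (l + 1)) - (l : ℝ) * A k l)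
      + ((1 - p) * β / 2) *
          (((k : ℝ) + 1) * (if l = 0 then 0 else A (k + 1) (l - 1)) - (k : ℝ) * A k l)
      + (p / 2) *
          (((l : ℝ) + 1) * (if k = 0 then 0 else A (k - 1) (l + 1)) - (l : ℝ) * A k l)
      + (p / 2) * (((l : ℝ) + 1) * A k (l + 1) - (l : ℝ) * A k l)
      + (p * γ / 2) * ((if k = 0 then 0 else A (k - 1) l) - A k l))
    (x y : ℝ) :
    ∑' k : ℕ, ∑' l : ℕ, B k l * x ^ k * y ^ l
      = ((1 - p) * β / 2) * (y - x) * deriv (fun x' : ℝ => genFun A x' y) x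
      + (((1 - p) / 2) * (x - y) + ((1 - p) * α / 2) * (x - y)
          + (p / 2) * (x - y) + (p / 2) * (1 - y))
          * deriv (fun y' : ℝ => genFun A x y') y
      + (p * γ / 2) * (x - 1) * genFun A x y := by
  have hA' := hasBoundedSupport_of_finite_support hA
  have hB' : B = ((1 - p) / 2 * (1 + α)) • (shiftFst (derivSnd A) - shiftSnd (derivSnd A))
      + ((1 - p) * β / 2) • (shiftSnd (derivFst A) - shiftFst (derivFst A))
      + (p / 2) • (shiftFst (derivSnd A) - shiftSnd (derivSnd A))
      + (p / 2) • (derivSnd A - shiftSnd (derivSnd A))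
      + (p * γ / 2) • (shiftFst A - A) := by
    funext k l
    simp only [hB, Pi.add_apply, Pi.sub_apply, Pi.smul_apply, smul_eq_mul, shiftFst_derivFst,
      shiftSnd_derivSnd]
    simp only [shiftFst, shiftSnd, derivFst, derivSnd, mul_ite, mul_zero]
  change genFun B x y = _
  rw [(hasDerivAt_genFun_fst x y hA').deriv, (hasDerivAt_genFun_snd x y hA').deriv, hB']
  simp (maxDischargeDepth := 10) only [genFun_add, genFun_sub, genFun_smul, genFun_shiftFst,
    genFun_shiftSnd, hA', HasBoundedSupport.add, HasBoundedSupport.sub, HasBoundedSupport.smul,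
    HasBoundedSupport.shiftFst, HasBoundedSupport.shiftSnd, HasBoundedSupport.derivFst,
    HasBoundedSupport.derivSnd]
  ring

/-- The generating-function PDE right-hand side for the heterogeneous
active-neighborhood expansion of the adaptive voter model: if `B(k,l)` is the
right-hand side of the heterogeneous ODE (with the moment-closure factors
`α`, `β`, `γ`), then
`∑_{k,l} B(k,l) x^k y^l = (p̄β/2)(y−x)Q_x + [(p̄/2)(x−y) + (p̄α/2)(x−y) + (p/2)(x−y) + (p/2)(1−y)]Q_y + (pγ/2)(x−1)Q`. -/
theorem voter_pde_rhs (p : ℝ) (hp : p ∈ Set.Icc (0 : ℝ) 1)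
    (A : ℕ → ℕ → ℝ)
    (hA : (Function.support fun q : ℕ × ℕ => A q.1 q.2).Finite)
    (hS0 : (∑' k : ℕ, ∑' l : ℕ, A k l) ≠ 0)
    (hSk : (∑' k : ℕ, ∑' l : ℕ, (k : ℝ) * A k l) ≠ 0)
    (hSl : (∑' k : ℕ, ∑' l : ℕ, (l : ℝ) * A k l) ≠ 0)
    (α β γ : ℝ)
    (hα : α = (∑' k : ℕ, ∑' l : ℕ, (l : ℝ) * ((l : ℝ) - 1) * A k l)
            / (∑' k : ℕ, ∑' l : ℕ, (l : ℝ) * A k l))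
    (hβ : β = (∑' k : ℕ, ∑' l : ℕ, (k : ℝ) * (l : ℝ) * A k l)
            / (∑' k : ℕ, ∑' l : ℕ, (k : ℝ) * A k l))
    (hγ : γ = (∑' k : ℕ, ∑' l : ℕ, (l : ℝ) * A k l)
            / (∑' k : ℕ, ∑' l : ℕ, A k l))
    (B : ℕ → ℕ → ℝ)
    (hB : ∀ k l : ℕ, B k l =
        ((1 - p) / 2) * (1 + α) *
          (((l : ℝ) + 1) * (if k = 0 then 0 else A (k - 1) (l + 1)) - (l : ℝ) * A k l)
      + ((1 - p) * β / 2) *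
          (((k : ℝ) + 1) * (if l = 0 then 0 else A (k + 1) (l - 1)) - (k : ℝ) * A k l)
      + (p / 2) *
          (((l : ℝ) + 1) * (if k = 0 then 0 else A (k - 1) (l + 1)) - (l : ℝ) * A k l)
      + (p / 2) * (((l : ℝ) + 1) * A k (l + 1) - (l : ℝ) * A k l)
      + (p * γ / 2) * ((if k = 0 then 0 else A (k - 1) l) - A k l))
    (x y : ℝ) :
    ∑' k : ℕ, ∑' l : ℕ, B k l * x ^ k * y ^ l
      = ((1 - p) * β / 2) * (y - x) * deriv (fun x' : ℝ => genFun A x' y) x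
      + (((1 - p) / 2) * (x - y) + ((1 - p) * α / 2) * (x - y)
          + (p / 2) * (x - y) + (p / 2) * (1 - y))
          * deriv (fun y' : ℝ => genFun A x y') y
      + (p * γ / 2) * (x - 1) * genFun A x y :=
  voter_pde_rhs_general p A hA α β γ B hB x y
end

section
/- Suppose A : ℕ × ℕ → ℝ → ℝ is a family of differentiable functions of time with uniformly finite support (there is a finite set S ⊂ ℕ × ℕ such that A(k,l)(t) = 0 for all t whenever (k,l) ∉ S), and fix real numbers a, b, c, d. If at every time t each coefficient satisfies (d/dt)A(k,l)(t) = a[(l+1)A(k−1,l+1)(t) − l·A(k,l)(t)] + b[(k+1)A(k+1,l−1)(t) − k·A(k,l)(t)] + c[(l+1)A(k,l+1)(t) − l·A(k,l)(t)] + d[A(k−1,l)(t) − A(k,l)(t)] (terms with negative indices being zero), then the function Q(x,y,t) = ∑_{k,l} A(k,l)(t) x^k y^l is differentiable in t and satisfies, for all x, y, t: ∂Q/∂t = b(y−x)·Q_x + [a(x−y) + c(1−y)]·Q_y + d(x−1)·Q. -/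
/-!
Once the coefficients vanish outside a box `[0, N)²`, `Q` is a polynomial, linear in the
coefficient array, and multiplication by `x` and differentiation in `x` act on coefficient arrays
as the shifts `mulX` and `dX` (similarly in `y`), with `x ∂ₓ` acting as `k · A(k,l)`. The ODE
says exactly that the array of time derivatives is the combination of shifted arrays that
represents the right-hand side of the PDE; applying the (linear) generating polynomial to it
gives the PDE.
-/

open Finset Function

theorem sum_range_succ_shift_mul_pow {N : ℕ} (g : ℕ → ℝ) (z : ℝ) (hg : g N = 0) :
    ∑ n ∈ range (N + 1), (if n = 0 then 0 else g (n - 1)) * z ^ n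
      = z * ∑ n ∈ range (N + 1), g n * z ^ n := by
  rw [sum_range_succ', sum_range_succ, hg, zero_mul, add_zero, mul_sum]
  simp only [Nat.add_sub_cancel, Nat.succ_ne_zero, if_false, if_true, zero_mul, add_zero]
  exact sum_congr rfl fun n _ => by ring

theorem hasDerivAt_sum_range_mul_pow {N : ℕ} (g : ℕ → ℝ) (z : ℝ) (hg : g (N + 1) = 0) :
    HasDerivAt (fun z => ∑ n ∈ range (N + 1), g n * z ^ n)
      (∑ n ∈ range (N + 1), ((n : ℝ) + 1) * g (n + 1) * z ^ n) z := by
  refine (HasDerivAt.fun_sum fun n _ => (hasDerivAt_pow n z).const_mul (g n)).congr_deriv ?_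
  rw [sum_range_succ', sum_range_succ _ N, hg]
  push_cast
  simp only [zero_mul, mul_zero, add_zero]
  exact sum_congr rfl fun n _ => by ring

namespace CoeffArray

def BoxSupported (N : ℕ) (f : ℕ → ℕ → ℝ) : Prop :=
  ∀ k l, N ≤ k ∨ N ≤ l → f k l = 0

def mulX (f : ℕ → ℕ → ℝ) (k l : ℕ) : ℝ := if k = 0 then 0 else f (k - 1) l

def mulY (f : ℕ → ℕ → ℝ) (k l : ℕ) : ℝ := if l = 0 then 0 else f k (l - 1)

def dX (f : ℕ → ℕ → ℝ) (k l : ℕ) : ℝ := ((k : ℝ) + 1) * f (k + 1) l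

def dY (f : ℕ → ℕ → ℝ) (k l : ℕ) : ℝ := ((l : ℝ) + 1) * f k (l + 1)

theorem mulY_eq_swap (f : ℕ → ℕ → ℝ) : mulY f = swap (mulX (swap f)) := rfl

theorem dY_eq_swap (f : ℕ → ℕ → ℝ) : dY f = swap (dX (swap f)) := rfl

theorem mulX_dX (f : ℕ → ℕ → ℝ) : mulX (dX f) = fun k l : ℕ => (k : ℝ) * f k l := by
  ext k l
  cases k <;> simp [mulX, dX]

theorem mulY_dY (f : ℕ → ℕ → ℝ) : mulY (dY f) = fun k l : ℕ => (l : ℝ) * f k l := by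
  ext k l
  cases l <;> simp [mulY, dY]

namespace BoxSupported

variable {N : ℕ} {f : ℕ → ℕ → ℝ}

theorem swap (hf : BoxSupported N f) : BoxSupported N (swap f) :=
  fun k l hkl => hf l k hkl.symm

theorem dX (hf : BoxSupported N f) : BoxSupported N (dX f) := fun k l hkl => by
  rw [CoeffArray.dX, hf (k + 1) l (by omega), mul_zero]

theorem dY (hf : BoxSupported N f) : BoxSupported N (dY f) := by
  rw [dY_eq_swap]
  exact hf.swap.dX.swap

end BoxSupported

def boxGenFun (M : ℕ) (x y : ℝ) : (ℕ → ℕ → ℝ) →ₗ[ℝ] ℝ where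
  toFun f := ∑ k ∈ range M, ∑ l ∈ range M, f k l * x ^ k * y ^ l
  map_add' f g := by simp only [Pi.add_apply, add_mul, sum_add_distrib]
  map_smul' r f := by
    simp only [Pi.smul_apply, smul_eq_mul, RingHom.id_apply, mul_sum, mul_assoc]

variable {M N : ℕ} {f : ℕ → ℕ → ℝ} (x y : ℝ)

theorem boxGenFun_apply (f : ℕ → ℕ → ℝ) :
    boxGenFun M x y f = ∑ k ∈ range M, ∑ l ∈ range M, f k l * x ^ k * y ^ l := rfl

theorem boxGenFun_eq_sum_rows (f : ℕ → ℕ → ℝ) :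
    boxGenFun M x y f = ∑ k ∈ range M, (∑ l ∈ range M, f k l * y ^ l) * x ^ k := by
  simp only [boxGenFun_apply, sum_mul]
  exact sum_congr rfl fun k _ => sum_congr rfl fun l _ => by ring

theorem boxGenFun_swap (f : ℕ → ℕ → ℝ) :
    boxGenFun M x y (swap f) = boxGenFun M y x f := by
  simp only [boxGenFun_apply, swap]
  rw [sum_comm]
  exact sum_congr rfl fun k _ => sum_congr rfl fun l _ => by ring

theorem tsum_tsum_eq_boxGenFun (hf : BoxSupported N f) :
    ∑' k, ∑' l, f k l * x ^ k * y ^ l = boxGenFun (N + 1) x y f := by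
  have hzero : ∀ k l, k ∉ range (N + 1) ∨ l ∉ range (N + 1) → f k l * x ^ k * y ^ l = 0 := by
    intro k l hkl
    rw [hf k l (by simp only [mem_range] at hkl; omega), zero_mul, zero_mul]
  rw [boxGenFun_apply, tsum_eq_sum fun k hk => by simp [hzero k _ (.inl hk)]]
  exact sum_congr rfl fun k _ => tsum_eq_sum fun l hl => hzero k l (.inr hl)

-- Summing over `range (N + 1)` leaves room for the row that `mulX` pushes out of `[0, N)`.
theorem boxGenFun_mulX (hf : BoxSupported N f) :
    boxGenFun (N + 1) x y (mulX f) = x * boxGenFun (N + 1) x y f := by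
  have hrow : ∀ k, ∑ l ∈ range (N + 1), mulX f k l * y ^ l
      = if k = 0 then 0 else ∑ l ∈ range (N + 1), f (k - 1) l * y ^ l := by
    intro k
    split_ifs with hk <;> simp [mulX, hk]
  simp only [boxGenFun_eq_sum_rows, hrow]
  refine sum_range_succ_shift_mul_pow (fun k => ∑ l ∈ range (N + 1), f k l * y ^ l) x ?_
  exact sum_eq_zero fun l _ => by rw [hf N l (.inl le_rfl), zero_mul]

theorem boxGenFun_mulY (hf : BoxSupported N f) :
    boxGenFun (N + 1) x y (mulY f) = y * boxGenFun (N + 1) x y f := by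
  rw [mulY_eq_swap, boxGenFun_swap, boxGenFun_mulX y x hf.swap, boxGenFun_swap]

theorem hasDerivAt_boxGenFun_x (hf : BoxSupported N f) :
    HasDerivAt (fun x => boxGenFun (N + 1) x y f) (boxGenFun (N + 1) x y (dX f)) x := by
  simp only [boxGenFun_eq_sum_rows]
  refine (hasDerivAt_sum_range_mul_pow (fun k => ∑ l ∈ range (N + 1), f k l * y ^ l) x ?_)
    |>.congr_deriv ?_
  · exact sum_eq_zero fun l _ => by rw [hf (N + 1) l (.inl (by omega)), zero_mul]
  · simp only [dX, mul_sum, sum_mul, mul_assoc]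

theorem hasDerivAt_boxGenFun_y (hf : BoxSupported N f) :
    HasDerivAt (fun y => boxGenFun (N + 1) x y f) (boxGenFun (N + 1) x y (dY f)) y := by
  rw [dY_eq_swap, boxGenFun_swap]
  simp only [← boxGenFun_swap _ x f]
  exact hasDerivAt_boxGenFun_x y x hf.swap

theorem hasDerivAt_boxGenFun_of_hasDerivAt {F : ℝ → ℕ → ℕ → ℝ} {F' : ℕ → ℕ → ℝ} {t : ℝ}
    (hF : ∀ k l, HasDerivAt (fun s => F s k l) (F' k l) t) :
    HasDerivAt (fun s => boxGenFun M x y (F s)) (boxGenFun M x y F') t := by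
  simp only [boxGenFun_apply]
  exact HasDerivAt.fun_sum fun k _ => HasDerivAt.fun_sum fun l _ =>
    ((hF k l).mul_const _).mul_const _

theorem exists_boxSupported_of_vanishing_off (S : Finset (ℕ × ℕ)) :
    ∃ N, ∀ f : ℕ → ℕ → ℝ, (∀ k l, (k, l) ∉ S → f k l = 0) → BoxSupported N f := by
  refine ⟨S.sup (fun p => max p.1 p.2) + 1, fun f hf k l hkl => hf k l fun hmem => ?_⟩
  have := le_sup (f := fun p : ℕ × ℕ => max p.1 p.2) hmem
  simp only [max_le_iff] at this
  omega

end CoeffArray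

open CoeffArray

/-- If a uniformly finitely supported, differentiable-in-time family of
coefficients `A(k,l)(t)` satisfies the shift ODE system
`(d/dt)A(k,l) = a[(l+1)A(k−1,l+1) − lA(k,l)] + b[(k+1)A(k+1,l−1) − kA(k,l)]
  + c[(l+1)A(k,l+1) − lA(k,l)] + d[A(k−1,l) − A(k,l)]`,
then its generating function `Q(x,y,t) = ∑_{k,l} A(k,l)(t) x^k y^l` satisfies
the PDE `Q_t = b(y−x)Q_x + [a(x−y) + c(1−y)]Q_y + d(x−1)Q`. -/
theorem genFun_pde_of_shift_ode (A : ℕ → ℕ → ℝ → ℝ) (a b c d : ℝ)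
    (S : Finset (ℕ × ℕ))
    (hS : ∀ k l : ℕ, (k, l) ∉ S → ∀ t : ℝ, A k l t = 0)
    (hdiff : ∀ k l : ℕ, Differentiable ℝ (A k l))
    (hode : ∀ (k l : ℕ) (t : ℝ), deriv (A k l) t =
        a * (((l : ℝ) + 1) * (if k = 0 then 0 else A (k - 1) (l + 1) t)
              - (l : ℝ) * A k l t)
      + b * (((k : ℝ) + 1) * (if l = 0 then 0 else A (k + 1) (l - 1) t)
              - (k : ℝ) * A k l t)
      + c * (((l : ℝ) + 1) * A k (l + 1) t - (l : ℝ) * A k l t)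
      + d * ((if k = 0 then 0 else A (k - 1) l t) - A k l t)) :
    ∀ (x y t : ℝ),
      HasDerivAt (fun s : ℝ => ∑' k : ℕ, ∑' l : ℕ, A k l s * x ^ k * y ^ l)
        (b * (y - x) *
            deriv (fun x' : ℝ => ∑' k : ℕ, ∑' l : ℕ, A k l t * x' ^ k * y ^ l) x
          + (a * (x - y) + c * (1 - y)) *
            deriv (fun y' : ℝ => ∑' k : ℕ, ∑' l : ℕ, A k l t * x ^ k * y' ^ l) y
          + d * (x - 1) * (∑' k : ℕ, ∑' l : ℕ, A k l t * x ^ k * y ^ l)) t := by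
  intro x y t
  obtain ⟨N, hN⟩ := exists_boxSupported_of_vanishing_off S
  have hA (s : ℝ) : BoxSupported N (fun k l => A k l s) := hN _ fun k l hkl => hS k l hkl s
  simp only [tsum_tsum_eq_boxGenFun _ _ (hA _),
    (hasDerivAt_boxGenFun_x x y (hA t)).deriv, (hasDerivAt_boxGenFun_y x y (hA t)).deriv]
  convert hasDerivAt_boxGenFun_of_hasDerivAt x y fun k l => (hdiff k l t).hasDerivAt using 1
  set At : ℕ → ℕ → ℝ := fun k l => A k l t
  have hAt : BoxSupported N At := hA t
  have hodeArray : (fun k l => deriv (A k l) t) = a • (mulX (dY At) - mulY (dY At))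
      + b • (mulY (dX At) - mulX (dX At)) + c • (dY At - mulY (dY At)) + d • (mulX At - At) := by
    ext k l
    simp only [mulX_dX, mulY_dY, hode]
    simp only [mulX, mulY, dX, dY, At, Pi.add_apply, Pi.sub_apply, Pi.smul_apply, smul_eq_mul]
    split_ifs <;> ring
  rw [hodeArray]
  simp only [map_add, map_sub, map_smul, smul_eq_mul, boxGenFun_mulX x y hAt,
    boxGenFun_mulX x y hAt.dY, boxGenFun_mulY x y hAt.dY, boxGenFun_mulY x y hAt.dX,
    boxGenFun_mulX x y hAt.dX]
  ring
end
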